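/- If a degree-n polynomial f over a field K is solvable by radicals, then such is witnessed over the splitting field: the Galois group of f over K is a solvable group (assuming K has characteristic zero). -/

import Mathlib

/-! Every irreducible factor of `f` has a root in the algebraic closure; that root is a root of `f`,
hence solvable by radicals, so the Galois group of the factor is solvable by the Abel–Ruffini
theorem. The Galois group of a product is a subgroup of the product of the Galois groups of its
factors, so solvability passes from the irreducible factors to `f`. -/

section

open Polynomial

variable {F E : Type*} [Field F] [Field E] [Algebra F E]

theorem IsSolvableByRad.mem_solvableByRad {x : E} (hx : IsSolvableByRad F x) :
    x ∈ solvableByRad F E := by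
  induction hx with
  | base a => exact IntermediateField.algebraMap_mem _ a
  | add _ _ _ _ ha hb => exact add_mem ha hb
  | neg _ _ ha => exact neg_mem ha
  | mul _ _ _ _ ha hb => exact mul_mem ha hb
  | inv _ _ ha => exact inv_mem ha
  | rad _ _ hn _ ha => exact solvableByRad.rad_mem hn ha

theorem isSolvable_gal_of_forall_irreducible_dvd (f : F[X])
    (h : ∀ p : F[X], Irreducible p → p ∣ f → Group.IsSolvable p.Gal) :
    Group.IsSolvable f.Gal := by
  induction f using WfDvdMonoid.induction_on_irreducible with
  | zero => exact gal_zero_isSolvable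
  | unit u hu =>
    obtain ⟨c, -, rfl⟩ := Polynomial.isUnit_iff.mp hu
    exact gal_C_isSolvable c
  | mul a p _ hp ih =>
    exact gal_mul_isSolvable (h p hp (dvd_mul_right p a))
      (ih fun q hq hqa ↦ h q hq (dvd_mul_of_dvd_right hqa p))

theorem isSolvable_gal_of_forall_root_mem_solvableByRad [IsAlgClosed E] (f : F[X])
    (hf : ∀ x : E, aeval x f = 0 → x ∈ solvableByRad F E) :
    Group.IsSolvable f.Gal := by
  refine isSolvable_gal_of_forall_irreducible_dvd f fun p hp ⟨q, hpq⟩ ↦ ?_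
  obtain ⟨x, hx⟩ := IsAlgClosed.exists_aeval_eq_zero E p (degree_pos_of_irreducible hp).ne'
  have hfx : aeval x f = 0 := by rw [hpq, map_mul, hx, zero_mul]
  exact isSolvable_gal_of_irreducible (hf x hfx) hp hx

end

open Polynomial in
theorem gal_isSolvable_of_solvableByRad_general {K : Type*} [Field K] (f : K[X])
    (hf : ∀ x : AlgebraicClosure K, aeval x f = 0 → IsSolvableByRad K x) :
    IsSolvable f.Gal :=
  isSolvable_gal_of_forall_root_mem_solvableByRad f fun x hx ↦ (hf x hx).mem_solvableByRad

open Polynomial in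
theorem gal_isSolvable_of_solvableByRad {K : Type*} [Field K] [CharZero K] (f : K[X])
    (hf : ∀ x : AlgebraicClosure K, aeval x f = 0 → IsSolvableByRad K x) :
    IsSolvable f.Gal :=
  gal_isSolvable_of_solvableByRad_general f hf
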